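/- Let δ ≥ 1, let Γ be a connected δ-hyperbolic graph, let D ≥ 8δ + 1, and let C be a nonempty set of vertices of Γ of diameter at most 4δ + 1. Let v be a vertex at graph distance a ≥ 2δ from C, let w ∈ C be at distance a from v, and let u be a vertex lying on a geodesic from v to w with d(u, v) = 2δ. Then every vertex t ∈ B_a(C) with d(t, v) ≤ D satisfies d(t, u) ≤ D; consequently, u dominates v in the subgraph of the Rips graph Γ_D induced on B_a(C). -/

import Mathlib

open SimpleGraph

variable {V : Type*}

/-- The closed neighbourhood of a vertex: the vertex together with all its neighbours. -/
def closedNbhd (G : SimpleGraph V) (ρ : V) : Set V := insert ρ {w | G.Adj ρ w}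

/-- `ρ` is dominated by `π` within the subgraph of `G` induced on `S`:
`π ∈ S`, `π ≠ ρ`, and `N(ρ) ∩ S ⊆ N(π)`. -/
def DominatedIn (G : SimpleGraph V) (S : Set V) (ρ π : V) : Prop :=
  π ∈ S ∧ π ≠ ρ ∧ ∀ w ∈ S, w ∈ closedNbhd G ρ → w ∈ closedNbhd G π

/-- The subgraph of `G` induced on `S` is dismantlable: the vertices of `S` can be
arranged in a (finite) list such that each vertex except the last is dominated in the
subgraph induced on it and the later vertices. -/
def DismantlableOn (G : SimpleGraph V) (S : Set V) : Prop :=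
  ∃ l : List V, l.Nodup ∧ (∀ v, v ∈ l ↔ v ∈ S) ∧
    ∀ (i : ℕ) (h : i < l.length), i < l.length - 1 →
      ∃ π, DominatedIn G {w | w ∈ l.drop i} (l[i]'h) π

/-- A graph is dismantlable if the subgraph induced on all of its vertices is. -/
def Dismantlable (G : SimpleGraph V) : Prop := DismantlableOn G Set.univ

/-- The set `Π*(ρ)` of all vertices appearing in pairs of `Π ρ`. -/
def PiStar (Pr : V → Finset (Sym2 V)) (ρ : V) : Set V := {v | ∃ p ∈ Pr ρ, v ∈ p}

/-- `Pr` is a `σ`-projection: it assigns to each vertex `ρ ≠ σ` a nonempty finite set of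
unordered pairs of vertices such that (i) every finite set `R` containing a vertex other
than `σ` has an exposed vertex, and (ii) there is no cycle `ρ₀, …, ρ_{m-1}` with
`ρ_{i+1} ∈ Π*(ρ_i)` (indices mod `m`). -/
structure IsSigmaProjection (G : SimpleGraph V) (σ : V) (Pr : V → Finset (Sym2 V)) : Prop where
  nonempty : ∀ ρ, ρ ≠ σ → (Pr ρ).Nonempty
  exposed : ∀ R : Finset V, (∃ ρ ∈ R, ρ ≠ σ) →
    ∃ ρ ∈ R, ρ ≠ σ ∧ ∃ p ∈ Pr ρ, ∀ π ∈ p,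
      ∀ w ∈ R, w ∈ closedNbhd G ρ → w ∈ closedNbhd G π
  acyclic : ¬ ∃ m : ℕ, 0 < m ∧ ∃ f : ZMod m → V,
    ∀ i, f i ≠ σ ∧ f (i + 1) ∈ PiStar Pr (f i)

/-- `R` is `Π`-convex: for every `ρ ∈ R` other than `σ`, each pair in `Π ρ` meets `R`. -/
def PiConvex (σ : V) (Pr : V → Finset (Sym2 V)) (R : Set V) : Prop :=
  ∀ ρ ∈ R, ρ ≠ σ → ∀ p ∈ Pr ρ, ∃ v ∈ p, v ∈ R

/-- The orbit `HR` of a set `R` under a group action. -/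
def orbitSet (H : Type*) [Group H] [MulAction H V] (R : Set V) : Set V :=
  {x | ∃ h : H, ∃ ρ ∈ R, x = h • ρ}

/-- The geometric realization of the flag complex of `G` inside `ℝ^V`: the union over
all (nonempty) cliques of the convex hulls of the corresponding standard basis vectors. -/
def flagRealization [DecidableEq V] (G : SimpleGraph V) : Set (V → ℝ) :=
  ⋃ (Δ : Set V) (_ : Δ.Nonempty) (_ : G.IsClique Δ),
    convexHull ℝ ((fun v => (Pi.single v 1 : V → ℝ)) '' Δ)

/-- A walk is a geodesic if its length equals the distance between its endpoints. -/
def IsGeodesic (G : SimpleGraph V) {u v : V} (p : G.Walk u v) : Prop :=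
  p.length = G.dist u v

/-- `G` is `δ`-hyperbolic: for any geodesic triangle, each vertex on one side is within
distance `δ` of some vertex on the union of the other two sides. -/
def Hyperbolic (G : SimpleGraph V) (δ : ℕ) : Prop :=
  ∀ (u v w : V) (p : G.Walk u v) (q : G.Walk v w) (r : G.Walk w u),
    IsGeodesic G p → IsGeodesic G q → IsGeodesic G r →
    ∀ t ∈ p.support, ∃ s, (s ∈ q.support ∨ s ∈ r.support) ∧ G.dist t s ≤ δ

/-- The Rips graph `Γ_D`: same vertices, two distinct vertices adjacent iff their
graph distance in `G` is at most `D`. -/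
def ripsGraph (G : SimpleGraph V) (D : ℕ) : SimpleGraph V where
  Adj u v := u ≠ v ∧ G.dist u v ≤ D
  symm := by
    refine ⟨fun u v h => ?_⟩
    exact ⟨h.1.symm, by rw [SimpleGraph.dist_comm]; exact h.2⟩
  loopless := by
    refine ⟨fun v h => ?_⟩
    exact h.1 rfl

/-- The ball of radius `r` around a set `C` of vertices. -/
def ballSet (G : SimpleGraph V) (C : Set V) (r : ℕ) : Set V :=
  {v | ∃ c ∈ C, G.dist v c ≤ r}

/- In a δ-hyperbolic graph, a vertex `u` at distance `2δ` from `v` on a geodesic `vw` is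
`δ`-close to a point `s` of one of the other two sides of the triangle `v w t`. Going from
`t` to `u` through `s` costs at most `d(t, v)` if `s` lies on `tv`, and at most
`d(t, w) - d(u, w) + 2δ ≤ (a + 4δ + 1) - (a - 2δ) + 2δ = 8δ + 1` if `s` lies on `wt`. -/

section

variable {G : SimpleGraph V}

lemma IsGeodesic.dist_add_dist {x y : V} {p : G.Walk x y} (hp : IsGeodesic G p) {z : V}
    (hz : z ∈ p.support) :
    G.dist x z + G.dist z y = G.dist x y := by
  classical
  rw [← length_eq_dist_of_subwalk hp (p.isSubwalk_takeUntil hz),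
    ← length_eq_dist_of_subwalk hp (p.isSubwalk_dropUntil hz), ← Walk.length_append,
    p.take_spec hz]
  exact hp

lemma IsGeodesic.dist_add_dist_le (hconn : G.Connected) {x y : V} {p : G.Walk x y}
    (hp : IsGeodesic G p) {s : V} (hs : s ∈ p.support) (u : V) :
    G.dist x u + G.dist u y ≤ G.dist x y + 2 * G.dist u s := by
  have hsplit := hp.dist_add_dist hs
  have hxu : G.dist x u ≤ G.dist x s + G.dist s u := hconn.dist_triangle
  have hsy : G.dist u y ≤ G.dist u s + G.dist s y := hconn.dist_triangle
  rw [dist_comm (u := s)] at hxu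
  omega

lemma Hyperbolic.dist_add_dist_le_or (hconn : G.Connected) {δ : ℕ} (hhyp : Hyperbolic G δ)
    {v w : V} {p : G.Walk v w} (hp : IsGeodesic G p) {u : V} (hu : u ∈ p.support) (t : V) :
    G.dist t u + G.dist u v ≤ G.dist t v + 2 * δ ∨
      G.dist t u + G.dist u w ≤ G.dist t w + 2 * δ := by
  obtain ⟨q, hq : IsGeodesic G q⟩ := hconn.exists_walk_length_eq_dist w t
  obtain ⟨r, hr : IsGeodesic G r⟩ := hconn.exists_walk_length_eq_dist t v
  obtain ⟨s, hs | hs, hus⟩ := hhyp v w t p q r hp hq hr u hu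
  · have := hq.dist_add_dist_le hconn hs u
    rw [dist_comm (u := w), dist_comm (u := u) (v := t), dist_comm (u := w)] at this
    omega
  · have := hr.dist_add_dist_le hconn hs u
    omega

lemma mem_closedNbhd_ripsGraph {D : ℕ} {ρ w : V} :
    w ∈ closedNbhd (ripsGraph G D) ρ ↔ G.dist ρ w ≤ D := by
  refine ⟨?_, fun h => ?_⟩
  · rintro (rfl | ⟨-, h⟩)
    · simp
    · exact h
  · by_cases hw : w = ρ
    · exact .inl hw
    · exact .inr ⟨Ne.symm hw, h⟩

lemma dominatedIn_ripsGraph {D : ℕ} {S : Set V} {u v : V} (hu : u ∈ S)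
    (hne : u ≠ v) (h : ∀ t ∈ S, G.dist t v ≤ D → G.dist t u ≤ D) :
    DominatedIn (ripsGraph G D) S v u := by
  refine ⟨hu, hne, fun t ht htv => ?_⟩
  rw [mem_closedNbhd_ripsGraph, dist_comm] at htv ⊢
  exact h t ht htv

end

theorem rips_domination_in_ball_general {V : Type*} (G : SimpleGraph V) (hconn : G.Connected)
    (δ : ℕ) (hδ : 1 ≤ δ) (hhyp : Hyperbolic G δ)
    (D : ℕ) (hD : 8 * δ + 1 ≤ D)
    (C : Set V) (hCdiam : ∀ x ∈ C, ∀ y ∈ C, G.dist x y ≤ 4 * δ + 1)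
    (v : V) (a : ℕ)
    (w : V) (hw : w ∈ C) (hvw : G.dist v w = a)
    (p : G.Walk v w) (hp : IsGeodesic G p)
    (u : V) (hu : u ∈ p.support) (huv : G.dist u v = 2 * δ) :
    (∀ t ∈ ballSet G C a, G.dist t v ≤ D → G.dist t u ≤ D) ∧
      DominatedIn (ripsGraph G D) (ballSet G C a) v u := by
  have hsplit := hp.dist_add_dist hu
  rw [dist_comm, huv, hvw] at hsplit
  have hclose : ∀ t ∈ ballSet G C a, G.dist t v ≤ D → G.dist t u ≤ D := by
    rintro t ⟨c, hc, htc⟩ htv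
    have htw : G.dist t w ≤ G.dist t c + G.dist c w := hconn.dist_triangle
    have hcw := hCdiam c hc w hw
    rcases hhyp.dist_add_dist_le_or hconn hp hu t with h | h <;> omega
  have hne : u ≠ v := by
    rintro rfl
    rw [SimpleGraph.dist_self] at huv
    omega
  exact ⟨hclose, dominatedIn_ripsGraph ⟨w, hw, by omega⟩ hne hclose⟩

/-- (Claim in the proof of Lemma 9.2.) Let `Γ` be connected and
`δ`-hyperbolic with `δ ≥ 1`, `D ≥ 8δ + 1`, and `C` a nonempty set of vertices of diameter
at most `4δ + 1`. Let `v` be at distance `a ≥ 2δ` from `C`, let `w ∈ C` with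
`d(v,w) = a`, and let `u` be a vertex on a geodesic from `v` to `w` with `d(u,v) = 2δ`.
Then every `t ∈ B_a(C)` with `d(t,v) ≤ D` satisfies `d(t,u) ≤ D`; consequently `u`
dominates `v` in the subgraph of the Rips graph `Γ_D` induced on `B_a(C)`. -/
theorem rips_domination_in_ball {V : Type*} (G : SimpleGraph V) (hconn : G.Connected)
    (δ : ℕ) (hδ : 1 ≤ δ) (hhyp : Hyperbolic G δ)
    (D : ℕ) (hD : 8 * δ + 1 ≤ D)
    (C : Set V) (hCne : C.Nonempty) (hCdiam : ∀ x ∈ C, ∀ y ∈ C, G.dist x y ≤ 4 * δ + 1)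
    (v : V) (a : ℕ) (ha : ∀ c ∈ C, a ≤ G.dist v c) (haδ : 2 * δ ≤ a)
    (w : V) (hw : w ∈ C) (hvw : G.dist v w = a)
    (p : G.Walk v w) (hp : IsGeodesic G p)
    (u : V) (hu : u ∈ p.support) (huv : G.dist u v = 2 * δ) :
    (∀ t ∈ ballSet G C a, G.dist t v ≤ D → G.dist t u ≤ D) ∧
      DominatedIn (ripsGraph G D) (ballSet G C a) v u :=
  rips_domination_in_ball_general G hconn δ hδ hhyp D hD C hCdiam v a w hw hvw p hp u hu huv
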